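/- arXiv:math/0507101 — 3 statements merged into one kernel-verified Lean document; each statement's English description precedes it below -/
import Mathlib

section
/- Let X be the set of real embeddings σ : F → ℝ. The monoid O_F \ {0} acts on Ô_F^♮ × {±1}^X by a·(x, ε) = (a·x, (sign(σ(a)))_σ · ε), and the group F^× acts on A_{f,F}^× × {±1}^X by the same formula. Then the inclusion Ô_F^♮ × {±1}^X ⊆ A_{f,F}^× × {±1}^X induces a bijection from the quotient of Ô_F^♮ × {±1}^X by the equivalence relation generated by (x, ε) ∼ a·(x, ε) for a ∈ O_F \ {0}, onto the quotient of A_{f,F}^× × {±1}^X by the action of F^×. -/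
/-!
Multiplying a finite idele by a suitable nonzero `d ∈ O_F` makes it integral: only finitely many
components are non-integral, and each is cleared by a power of a uniformiser. This gives
surjectivity. For injectivity, if two integral points satisfy `q = a • p` with `a ∈ F^×`, write
`a = n / c` with `n, c ∈ O_F`; then `c • q = n • p` is an integral point reached from both `p`
and `q` by the action of `O_F \ {0}`.
-/

open IsDedekindDomain IsDedekindDomain.HeightOneSpectrum NumberField

noncomputable section

variable (F : Type) [Field F] [NumberField F]

/-- The finite adele ring of the number field `F`. -/
abbrev AF := FiniteAdeleRing (𝓞 F) F

/-- A finite adele is integral if all its components are integral. -/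
def IsIntegralAdele (x : AF F) : Prop :=
  ∀ v : HeightOneSpectrum (𝓞 F), x v ∈ v.adicCompletionIntegers F

/-- Ô_F^♮, the submonoid of A_{f,F}^× of integral finite ideles. -/
def natSub : Submonoid (AF F)ˣ where
  carrier := {u | IsIntegralAdele F (u : AF F)}
  one_mem' := fun v => one_mem _
  mul_mem' := fun ha hb v => mul_mem (ha v) (hb v)

/-- The diagonal embedding of F^× into the finite ideles of F. -/
def diagF : Fˣ →* (AF F)ˣ := Units.map (algebraMap F (AF F)).toMonoidHom

/-- The sign (as an element of {±1} = ℤˣ) of the image of `a` under a real embedding `σ`. -/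
def signEmb (a : F) (σ : F →+* ℝ) : ℤˣ := if 0 < σ a then 1 else -1

/-- The relation on Ô_F^♮ × {±1}^X generated by the action of O_F \ {0}
(nonzero integers being encoded as units of F that are integral). -/
def relNat : (natSub F × ((F →+* ℝ) → ℤˣ)) → (natSub F × ((F →+* ℝ) → ℤˣ)) → Prop :=
  fun p q => ∃ a : Fˣ, (∃ b : 𝓞 F, algebraMap (𝓞 F) F b = (a : F)) ∧
    (q.1 : (AF F)ˣ) = diagF F a * (p.1 : (AF F)ˣ) ∧
    q.2 = fun σ => signEmb F (a : F) σ * p.2 σ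

/-- The orbit relation of the action of F^× on A_{f,F}^× × {±1}^X. -/
def relFull : ((AF F)ˣ × ((F →+* ℝ) → ℤˣ)) → ((AF F)ˣ × ((F →+* ℝ) → ℤˣ)) → Prop :=
  fun p q => ∃ a : Fˣ,
    q.1 = diagF F a * p.1 ∧ q.2 = fun σ => signEmb F (a : F) σ * p.2 σ

open nonZeroDivisors

theorem IsFractionRing.exists_mul_mem_range_algebraMap (R : Type*) {K : Type*} [CommRing R]
    [IsDomain R] [Field K] [Algebra R K] [IsFractionRing R K] (a : Kˣ) :
    ∃ c : Kˣ, (c : K) ∈ (algebraMap R K).range ∧ ((c * a : Kˣ) : K) ∈ (algebraMap R K).range := by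
  obtain ⟨⟨n, d, hd⟩, hnd⟩ := IsLocalization.surj R⁰ (a : K)
  have hd0 : algebraMap R K d ≠ 0 := IsFractionRing.to_map_ne_zero_of_mem_nonZeroDivisors hd
  exact ⟨Units.mk0 _ hd0, ⟨d, rfl⟩, ⟨n, by simpa [mul_comm] using hnd.symm⟩⟩

theorem MonoidHom.equivalence_exists_eq_mul {H G : Type*} [Group H] [Group G] (φ : H →* G) :
    Equivalence fun p q : G => ∃ a, q = φ a * p :=
  ⟨fun _ => ⟨1, by simp⟩, fun ⟨a, h⟩ => ⟨a⁻¹, by simp [h]⟩,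
    fun ⟨a, h⟩ ⟨b, h'⟩ => ⟨b * a, by simp [h, h', mul_assoc]⟩⟩

namespace IsDedekindDomain.FiniteAdeleRing

variable {R K : Type*} [CommRing R] [IsDedekindDomain R] [Field K] [Algebra R K]
  [IsFractionRing R K]

theorem exists_nonZeroDivisor_mul_mem_adicCompletionIntegers (x : FiniteAdeleRing R K) :
    ∃ d ∈ R⁰, ∀ v, (algebraMap R (FiniteAdeleRing R K) d * x) v ∈ v.adicCompletionIntegers K := by
  classical
  have hbad : {v | x v ∉ v.adicCompletionIntegers K}.Finite := Filter.eventually_cofinite.mp x.2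
  choose b hb hbv using
    fun v => adicCompletion.mul_nonZeroDivisor_mem_adicCompletionIntegers v (x v)
  refine ⟨∏ w ∈ hbad.toFinset, b w, prod_mem fun w _ => hb w, fun v => ?_⟩
  change algebraMap R (v.adicCompletion K) (∏ w ∈ hbad.toFinset, b w) * x v ∈ _
  rw [mul_comm]
  by_cases hv : v ∈ hbad.toFinset
  · rw [← Finset.mul_prod_erase _ _ hv, map_mul, ← mul_assoc]
    exact mul_mem (hbv v) (coe_mem_adicCompletionIntegers v _)
  · exact mul_mem (by simpa using hv) (coe_mem_adicCompletionIntegers v _)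

end IsDedekindDomain.FiniteAdeleRing

section

variable {F}

omit [NumberField F] in
theorem signEmb_mul {a b : F} (ha : a ≠ 0) (hb : b ≠ 0) (σ : F →+* ℝ) :
    signEmb F (a * b) σ = signEmb F a σ * signEmb F b σ := by
  have ha' : σ a ≠ 0 := (map_ne_zero σ).mpr ha
  have hb' : σ b ≠ 0 := (map_ne_zero σ).mpr hb
  unfold signEmb
  rw [map_mul]
  rcases ha'.lt_or_gt with h | h <;> rcases hb'.lt_or_gt with h' | h' <;>
    simp [mul_pos_iff, h, h', asymm h, asymm h']

variable (F) in
def signEmbHom : Fˣ →* ((F →+* ℝ) → ℤˣ) where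
  toFun a σ := signEmb F a σ
  map_one' := funext fun σ => by simp [signEmb]
  map_mul' a b := funext fun σ => signEmb_mul a.ne_zero b.ne_zero σ

variable (F) in
def diagSign : Fˣ →* (AF F)ˣ × ((F →+* ℝ) → ℤˣ) := (diagF F).prod (signEmbHom F)

theorem relFull_iff {p q : (AF F)ˣ × ((F →+* ℝ) → ℤˣ)} :
    relFull F p q ↔ ∃ a, q = diagSign F a * p :=
  exists_congr fun _ => by rw [Prod.ext_iff]; rfl

theorem relFull_equivalence : Equivalence (relFull F) := by
  have h : relFull F = fun p q => ∃ a, q = diagSign F a * p :=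
    funext₂ fun _ _ => propext relFull_iff
  exact h ▸ (diagSign F).equivalence_exists_eq_mul

theorem relNat_of_eq {p q : natSub F × ((F →+* ℝ) → ℤˣ)} {a : Fˣ}
    (ha : (a : F) ∈ (algebraMap (𝓞 F) F).range)
    (h : ((q.1 : (AF F)ˣ), q.2) = diagSign F a * ((p.1 : (AF F)ˣ), p.2)) : relNat F p q :=
  ⟨a, ha, congrArg Prod.fst h, congrArg Prod.snd h⟩

theorem diagF_mul_mem_natSub {a : Fˣ} (ha : (a : F) ∈ (algebraMap (𝓞 F) F).range)
    {u : (AF F)ˣ} (hu : u ∈ natSub F) : diagF F a * u ∈ natSub F := by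
  obtain ⟨b, hb⟩ := ha
  intro v
  refine mul_mem ?_ (hu v)
  change ((a : F) : v.adicCompletion F) ∈ _
  rw [← hb]
  exact coe_mem_adicCompletionIntegers v b

theorem exists_diagF_mul_mem_natSub (u : (AF F)ˣ) : ∃ d : Fˣ, diagF F d * u ∈ natSub F := by
  obtain ⟨d, hd, hdu⟩ :=
    FiniteAdeleRing.exists_nonZeroDivisor_mul_mem_adicCompletionIntegers (u : AF F)
  have hd0 : algebraMap (𝓞 F) F d ≠ 0 := IsFractionRing.to_map_ne_zero_of_mem_nonZeroDivisors hd
  exact ⟨Units.mk0 _ hd0, hdu⟩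

theorem quot_mk_relNat_eq_of_eq_diagSign_mul {p q : natSub F × ((F →+* ℝ) → ℤˣ)} {a : Fˣ}
    (h : ((q.1 : (AF F)ˣ), q.2) = diagSign F a * ((p.1 : (AF F)ˣ), p.2)) :
    Quot.mk (relNat F) p = Quot.mk (relNat F) q := by
  obtain ⟨c, hc, hca⟩ := IsFractionRing.exists_mul_mem_range_algebraMap (𝓞 F) a
  let r : natSub F × ((F →+* ℝ) → ℤˣ) :=
    (⟨diagF F (c * a) * p.1, diagF_mul_mem_natSub hca p.1.2⟩, signEmbHom F (c * a) * p.2)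
  have hpr : relNat F p r := relNat_of_eq hca rfl
  have hqr : relNat F q r := relNat_of_eq hc (by rw [h, ← mul_assoc, ← map_mul]; rfl)
  exact (Quot.sound hpr).trans (Quot.sound hqr).symm

end

/-- The inclusion Ô_F^♮ × {±1}^X ⊆ A_{f,F}^× × {±1}^X induces a bijection
(O_F \ {0})\(Ô_F^♮ × {±1}^X) ≅ F^×\(A_{f,F}^× × {±1}^X). -/
theorem quotient_natSub_pm_bijective :
    Function.Bijective
      (Quot.lift
        (fun p : natSub F × ((F →+* ℝ) → ℤˣ) =>
          Quot.mk (relFull F) ((p.1 : (AF F)ˣ), p.2))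
        (fun p q h => by
          obtain ⟨a, -, h1, h2⟩ := h
          exact Quot.sound ⟨a, h1, h2⟩) :
        Quot (relNat F) → Quot (relFull F)) := by
  constructor
  · rintro ⟨p⟩ ⟨q⟩ h
    obtain ⟨a, ha⟩ := relFull_iff.1 (relFull_equivalence.eqvGen_iff.1 (Quot.eq.1 h))
    exact quot_mk_relNat_eq_of_eq_diagSign_mul ha
  · rintro ⟨u, ε⟩
    obtain ⟨d, hdu⟩ := exists_diagF_mul_mem_natSub u
    exact ⟨Quot.mk _ (⟨_, hdu⟩, signEmbHom F d * ε), (Quot.sound ⟨d, rfl, rfl⟩).symm⟩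
end
end

section
/- Let F be a totally real number field and let M₂(Ô_F)^♮ := {m ∈ M₂(A_{f,F}) : m is invertible in the ring M₂(A_{f,F}) and every entry of m lies in Ô_F}, a multiplicative submonoid of GL₂(A_{f,F}). Then the inclusion induces a bijection from the quotient of M₂(Ô_F)^♮ by the equivalence relation generated by m ∼ a·m for a ∈ O_F \ {0} (acting by scalar multiplication), onto the quotient of GL₂(A_{f,F}) by the subgroup of scalar matrices with entries in the diagonally embedded F^×. -/
open IsDedekindDomain IsDedekindDomain.HeightOneSpectrum NumberField

set_option synthInstance.maxHeartbeats 400000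
set_option maxHeartbeats 1000000

noncomputable section

variable (F : Type) [Field F] [NumberField F]

/-- Evaluation of a finite adele at a finite place, as a ring homomorphism. -/
def evalAt (v : HeightOneSpectrum (𝓞 F)) : AF F →+* v.adicCompletion F where
  toFun x := x v
  map_one' := rfl
  map_mul' _ _ := rfl
  map_zero' := rfl
  map_add' _ _ := rfl

/-- 2×2 matrices over the finite adele ring. -/
abbrev M2A := Matrix (Fin 2) (Fin 2) (AF F)

/-- M₂(Ô_F)^♮: the submonoid of GL₂(A_{f,F}) of invertible matrices all of whose entries
are integral. -/
def m2Nat : Submonoid (M2A F)ˣ where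
  carrier := {m | ∀ i j, IsIntegralAdele F ((m : M2A F) i j)}
  one_mem' := by
    intro i j v
    show evalAt F v (((1 : (M2A F)ˣ) : M2A F) i j) ∈ _
    rw [Units.val_one, Matrix.one_apply]
    split_ifs
    · rw [map_one]; exact one_mem _
    · rw [map_zero]; exact zero_mem _
  mul_mem' := by
    intro a b ha hb i j v
    show evalAt F v (((a * b : (M2A F)ˣ) : M2A F) i j) ∈ _
    rw [Units.val_mul, Matrix.mul_apply, map_sum]
    exact sum_mem fun k _ => mul_mem (ha i k v) (hb k j v)

/-- The scalar matrix attached to an element of F^×, as an element of GL₂(A_{f,F}). -/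
def scalarUnit : Fˣ →* (M2A F)ˣ :=
  Units.map ((Matrix.scalar (Fin 2)).comp (algebraMap F (AF F))).toMonoidHom

/-- The relation on M₂(Ô_F)^♮ generated by scalar multiplication by O_F \ {0}
(nonzero integers being encoded as units of F that are integral over ℤ). -/
def relM2Nat : m2Nat F → m2Nat F → Prop := fun p q =>
  ∃ a : Fˣ, (∃ b : 𝓞 F, algebraMap (𝓞 F) F b = (a : F)) ∧
    (q : (M2A F)ˣ) = scalarUnit F a * (p : (M2A F)ˣ)

/-- The orbit relation on GL₂(A_{f,F}) of the subgroup of scalar matrices with entries in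
the diagonally embedded F^×. -/
def relGL2 : (M2A F)ˣ → (M2A F)ˣ → Prop := fun g g' =>
  ∃ a : Fˣ, g' = scalarUnit F a * g

/-!
Every element of `F^×` is a quotient `x / y` of nonzero integers. Hence the `F^×`-orbit of
`g ∈ GL₂(A_{f,F})` meets `M₂(Ô_F)^♮`: the entries of `g` have finitely many non-integral
components, so one nonzero integer clears all their denominators. And if `q = a p` with
`p, q ∈ M₂(Ô_F)^♮` and `a = x / y`, then `x p = y q` in `M₂(Ô_F)^♮`, so `p ∼ q`.
-/

open scoped nonZeroDivisors

namespace IsDedekindDomain.FiniteAdeleRing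

variable (R K : Type*) [CommRing R] [IsDedekindDomain R] [Field K] [Algebra R K]
  [IsFractionRing R K]

def integralAdeles : Subring (FiniteAdeleRing R K) where
  carrier := {x | ∀ v : HeightOneSpectrum R, x v ∈ v.adicCompletionIntegers K}
  mul_mem' hx hy v := mul_mem (hx v) (hy v)
  one_mem' _ := one_mem _
  add_mem' hx hy v := add_mem (hx v) (hy v)
  zero_mem' _ := zero_mem _
  neg_mem' hx v := neg_mem (hx v)

variable {R K}

lemma algebraMap_mem_integralAdeles (r : R) :
    algebraMap R (FiniteAdeleRing R K) r ∈ integralAdeles R K := fun v =>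
  coe_algebraMap_mem R K v r

lemma exists_nonZeroDivisor_mul_mem_integralAdeles (x : FiniteAdeleRing R K) :
    ∃ b ∈ R⁰, x * algebraMap R _ b ∈ integralAdeles R K := by
  have hfin : {v : HeightOneSpectrum R | x v ∉ v.adicCompletionIntegers K}.Finite :=
    Filter.eventually_cofinite.mp x.2
  choose c hc hcx using fun v : HeightOneSpectrum R =>
    adicCompletion.mul_nonZeroDivisor_mem_adicCompletionIntegers (K := K) v (x v)
  refine ⟨∏ v ∈ hfin.toFinset, c v, prod_mem fun v _ => hc v, fun w => ?_⟩
  by_cases hw : w ∈ hfin.toFinset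
  · obtain ⟨d, hd⟩ := Finset.dvd_prod_of_mem c hw
    rw [hd, map_mul, ← mul_assoc]
    exact mul_mem (hcx w) (algebraMap_mem_integralAdeles d w)
  · exact mul_mem (not_not.mp (hfin.mem_toFinset.not.mp hw))
      (algebraMap_mem_integralAdeles _ w)

lemma exists_nonZeroDivisor_forall_mul_mem_integralAdeles {ι : Type*} [Finite ι]
    (x : ι → FiniteAdeleRing R K) :
    ∃ b ∈ R⁰, ∀ i, x i * algebraMap R _ b ∈ integralAdeles R K := by
  have := Fintype.ofFinite ι
  choose c hc hcx using fun i => exists_nonZeroDivisor_mul_mem_integralAdeles (x i)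
  refine ⟨∏ i, c i, prod_mem fun i _ => hc i, fun i => ?_⟩
  obtain ⟨d, hd⟩ := Finset.dvd_prod_of_mem c (Finset.mem_univ i)
  rw [hd, map_mul, ← mul_assoc]
  exact mul_mem (hcx i) (algebraMap_mem_integralAdeles d)

end IsDedekindDomain.FiniteAdeleRing

open IsDedekindDomain.FiniteAdeleRing

/-- `O_F ∖ {0}`, viewed inside `F^×`. -/
def integralUnits : Set Fˣ := {a | ∃ b : 𝓞 F, algebraMap (𝓞 F) F b = a}

section

variable {F}

lemma exists_mul_eq_mem_integralUnits (a : Fˣ) :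
    ∃ x ∈ integralUnits F, ∃ y ∈ integralUnits F, y * a = x := by
  obtain ⟨⟨x, y⟩, hxy⟩ := IsLocalization.surj (𝓞 F)⁰ (a : F)
  have hy : IsUnit (algebraMap (𝓞 F) F y) := IsLocalization.map_units F y
  have hx : IsUnit (algebraMap (𝓞 F) F x) := hxy ▸ a.isUnit.mul hy
  exact ⟨hx.unit, ⟨x, rfl⟩, hy.unit, ⟨y, rfl⟩, Units.ext (by simpa [mul_comm] using hxy)⟩

lemma mem_m2Nat_iff {g : (M2A F)ˣ} :
    g ∈ m2Nat F ↔ ∀ i j, (g : M2A F) i j ∈ integralAdeles (𝓞 F) F :=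
  Iff.rfl

lemma scalarUnit_mul_apply (a : Fˣ) (g : (M2A F)ˣ) (i j : Fin 2) :
    ((scalarUnit F a * g : (M2A F)ˣ) : M2A F) i j =
      algebraMap F (AF F) a * (g : M2A F) i j := by
  simp [scalarUnit, Matrix.scalar]

lemma scalarUnit_mul_mem_m2Nat {a : Fˣ} (ha : a ∈ integralUnits F) {g : (M2A F)ˣ}
    (hg : g ∈ m2Nat F) : scalarUnit F a * g ∈ m2Nat F := by
  obtain ⟨b, hb⟩ := ha
  rw [mem_m2Nat_iff] at hg ⊢
  intro i j
  rw [scalarUnit_mul_apply, ← hb, ← IsScalarTower.algebraMap_apply]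
  exact mul_mem (algebraMap_mem_integralAdeles b) (hg i j)

lemma exists_scalarUnit_mul_mem_m2Nat (g : (M2A F)ˣ) :
    ∃ a ∈ integralUnits F, scalarUnit F a * g ∈ m2Nat F := by
  obtain ⟨b, hb, hbg⟩ := exists_nonZeroDivisor_forall_mul_mem_integralAdeles
    fun k : Fin 2 × Fin 2 => (g : M2A F) k.1 k.2
  have hbF : IsUnit (algebraMap (𝓞 F) F b) := IsLocalization.map_units F ⟨b, hb⟩
  refine ⟨hbF.unit, ⟨b, rfl⟩, mem_m2Nat_iff.mpr fun i j => ?_⟩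
  rw [scalarUnit_mul_apply, IsUnit.unit_spec, ← IsScalarTower.algebraMap_apply, mul_comm]
  exact hbg (i, j)

lemma relGL2_equivalence : Equivalence (relGL2 F) where
  refl g := ⟨1, by rw [map_one, one_mul]⟩
  symm := by
    rintro g g' ⟨a, rfl⟩
    exact ⟨a⁻¹, by rw [← mul_assoc, ← map_mul, inv_mul_cancel, map_one, one_mul]⟩
  trans := by
    rintro g g' g'' ⟨a, rfl⟩ ⟨b, rfl⟩
    exact ⟨b * a, by rw [map_mul, mul_assoc]⟩

end

/-- For a totally real number field F, the inclusion M₂(Ô_F)^♮ ⊆ GL₂(A_{f,F}) induces a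
bijection (O_F \ {0})\M₂(Ô_F)^♮ ≅ F^×\GL₂(A_{f,F}). -/
theorem quotient_m2Nat_bijective :
    Function.Bijective
      (Quot.lift (fun p : m2Nat F => Quot.mk (relGL2 F) (p : (M2A F)ˣ))
        (fun p q h => by
          obtain ⟨a, -, h1⟩ := h
          exact Quot.sound ⟨a, h1⟩) :
        Quot (relM2Nat F) → Quot (relGL2 F)) := by
  constructor
  · refine fun x y => Quot.induction_on₂ x y fun p q h => ?_
    obtain ⟨a, hqp⟩ := relGL2_equivalence.eqvGen_iff.mp (Quot.eqvGen_exact h)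
    obtain ⟨x, hx, y, hy, hyx⟩ := exists_mul_eq_mem_integralUnits a
    calc Quot.mk _ p = Quot.mk _ ⟨_, scalarUnit_mul_mem_m2Nat hx p.2⟩ := Quot.sound ⟨x, hx, rfl⟩
      _ = Quot.mk _ ⟨_, scalarUnit_mul_mem_m2Nat hy q.2⟩ := by
        congr 1
        ext : 1
        simp only [hqp, ← hyx, map_mul, mul_assoc]
      _ = Quot.mk _ q := (Quot.sound ⟨y, hy, rfl⟩).symm
  · refine Quot.ind fun g => ?_
    obtain ⟨a, ha, hag⟩ := exists_scalarUnit_mul_mem_m2Nat g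
    exact ⟨Quot.mk _ ⟨_, hag⟩, (Quot.sound ⟨a, rfl⟩).symm⟩
end
end

section
/- Let m be a nonzero ideal of O_F, let K(m) := {u ∈ Ô_F^× : u − 1 ∈ m·Ô_F} and K^♮(m) := {x ∈ Ô_F^♮ : x − 1 ∈ m·Ô_F}, where m·Ô_F is the ideal of Ô_F generated by the image of m. Then the map x ↦ I(x) induces an isomorphism of multiplicative monoids from the quotient monoid K(m)\K^♮(m) onto the monoid of nonzero ideals J of O_F that are coprime to m (i.e. J + m = O_F); in particular the induced map K(m)\K^♮(m) → Ô_F^×\Ô_F^♮ is injective. -/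
/-!
An integral idele `x` has `|x_v| = exp (-n_v)` for a finitely supported `n : v ↦ ℕ`, and
`I(x) = ∏ v ^ n_v`. Hence `x ↦ I(x)` is multiplicative, and by unique factorization `I(x)`
determines every `|x_v|`, so `I(x) = I(y)` exactly when `y = x u` with `u ∈ Ô_F^×`.

The congruence `z ∈ m·Ô_F` is local: it says `|z_v| ≤ |a|_v` for some `a ∈ m` at every `v`.
For `x ∈ K^♮(m)` this makes `x_v` a unit at every `v ∣ m`, so `I(x)` is prime to `m`; and if
`y = x u` with `x, y ∈ K^♮(m)`, then at `v ∣ m` we get `u_v - 1 = x_v⁻¹ ((y_v - 1) - (x_v - 1))`,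
so `u ∈ K(m)`. Finally an ideal `J = ∏ v ^ n_v` prime to `m` is `I(x)` for `x_v = π_v ^ n_v`
with uniformizers `π_v`, and this `x` is `1` at every `v ∣ m`.
-/
open IsDedekindDomain IsDedekindDomain.HeightOneSpectrum NumberField

noncomputable section

variable (F : Type) [Field F] [NumberField F]

/-- Ô_F^×, the subgroup of A_{f,F}^× of ideles integral with integral inverse. -/
def unitsSub : Subgroup (AF F)ˣ where
  carrier := {u | IsIntegralAdele F (u : AF F) ∧ IsIntegralAdele F ((u⁻¹ : (AF F)ˣ) : AF F)}
  one_mem' := ⟨fun v => one_mem _, fun v => one_mem _⟩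
  mul_mem' := by
    rintro a b ⟨ha, ha'⟩ ⟨hb, hb'⟩
    exact ⟨fun v => mul_mem (ha v) (hb v), by
      rw [mul_inv_rev]; exact fun v => mul_mem (hb' v) (ha' v)⟩
  inv_mem' := by
    rintro a ⟨ha, ha'⟩
    exact ⟨ha', by rw [inv_inv]; exact ha⟩

/-- The ideal I(x) = {a ∈ O_F : v(a) ≥ v(x_v) for all finite places v} attached to a
finite adele x (additive valuations; multiplicatively, Valued.v ≤). -/
def idealOf (x : AF F) : Ideal (𝓞 F) where
  carrier := {a | ∀ v : HeightOneSpectrum (𝓞 F),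
    Valued.v (algebraMap (𝓞 F) (v.adicCompletion F) a) ≤ Valued.v (x v)}
  zero_mem' := fun v => by
    rw [RingHom.map_zero, Valuation.map_zero]; exact zero_le'
  add_mem' := fun {a b} ha hb v => by
    rw [RingHom.map_add]
    exact le_trans (Valued.v.map_add _ _) (max_le (ha v) (hb v))
  smul_mem' := fun c a ha v => by
    rw [smul_eq_mul, RingHom.map_mul, Valuation.map_mul]
    calc Valued.v (algebraMap (𝓞 F) (v.adicCompletion F) c) *
        Valued.v (algebraMap (𝓞 F) (v.adicCompletion F) a)
        ≤ 1 * Valued.v (x v) := by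
          refine mul_le_mul' ?_ (ha v)
          have := coe_mem_adicCompletionIntegers (K := F) v c
          rwa [mem_adicCompletionIntegers] at this
      _ = Valued.v (x v) := one_mul _

/-- Ô_F, the subring of integral finite adeles of A_{f,F}. -/
def intSubring : Subring (AF F) where
  carrier := {x | IsIntegralAdele F x}
  one_mem' := fun v => one_mem _
  mul_mem' := fun ha hb v => mul_mem (ha v) (hb v)
  zero_mem' := fun v => zero_mem _
  add_mem' := fun ha hb v => add_mem (ha v) (hb v)
  neg_mem' := fun ha v => neg_mem (ha v)

/-- The natural ring homomorphism O_F → Ô_F. -/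
def toInt : 𝓞 F →+* intSubring F :=
  (algebraMap (𝓞 F) (AF F)).codRestrict (intSubring F)
    (fun a v => IsDedekindDomain.HeightOneSpectrum.coe_mem_adicCompletionIntegers v a)

/-- The ideal m·Ô_F of Ô_F generated by the image of the ideal m of O_F. -/
def congIdeal (m : Ideal (𝓞 F)) : Ideal (intSubring F) := Ideal.map (toInt F) m

/-- Membership in K^♮(m) = {x ∈ Ô_F^♮ : x − 1 ∈ m·Ô_F}. -/
def MemKNat (m : Ideal (𝓞 F)) (x : (AF F)ˣ) : Prop :=
  ∃ hx : (x : AF F) ∈ intSubring F,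
    ((⟨(x : AF F), hx⟩ : intSubring F) - 1) ∈ congIdeal F m

/-- Membership in K(m) = {u ∈ Ô_F^× : u − 1 ∈ m·Ô_F}. -/
def MemK (m : Ideal (𝓞 F)) (u : (AF F)ˣ) : Prop :=
  u ∈ unitsSub F ∧ MemKNat F m u

section DedekindDomain

variable {R : Type*} [CommRing R]

open WithZero

theorem hasFiniteMulSupport_pow {n : HeightOneSpectrum R → ℕ}
    (hn : (Function.support n).Finite) :
    Function.HasFiniteMulSupport fun v : HeightOneSpectrum R ↦ v.asIdeal ^ n v :=
  hn.subset fun v hv h ↦ hv (by simp [h])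

variable [IsDedekindDomain R]

theorem mem_finprod_pow_iff {n : HeightOneSpectrum R → ℕ} (hn : (Function.support n).Finite)
    (a : R) :
    a ∈ ∏ᶠ v, v.asIdeal ^ n v ↔ ∀ v, v.intValuation a ≤ exp (-(n v : ℤ)) := by
  classical
  rw [finprod_eq_prod _ (hasFiniteMulSupport_pow hn),
    Ideal.prod_eq_iInf_of_pairwise_isCoprime fun v _ w _ hvw ↦ isCoprime_pow_of_ne v w hvw _ _]
  simp only [Submodule.mem_iInf, intValuation_le_pow_iff_mem]
  refine ⟨fun h v ↦ ?_, fun h v _ ↦ h v⟩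
  by_cases hv : v.asIdeal ^ n v = 1
  · simp [hv]
  · exact h v ((Set.Finite.mem_toFinset _).mpr hv)

theorem finprod_pow_ne_bot (n : HeightOneSpectrum R → ℕ) : ∏ᶠ v, v.asIdeal ^ n v ≠ ⊥ :=
  finprod_induction (· ≠ ⊥) (by simp) (fun _ _ hI hJ ↦ by simp [hI, hJ]) fun v ↦
    pow_ne_zero _ v.ne_bot

theorem finprod_pow_sup_eq_top {n : HeightOneSpectrum R → ℕ} {m : Ideal R}
    (h : ∀ v, n v ≠ 0 → ¬ m ≤ v.asIdeal) : (∏ᶠ v, v.asIdeal ^ n v) ⊔ m = ⊤ := by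
  rw [← Ideal.isCoprime_iff_sup_eq]
  refine finprod_induction (IsCoprime · m) isCoprime_one_left (fun _ _ ↦ IsCoprime.mul_left)
    fun v ↦ ?_
  by_cases hv : n v = 0
  · rw [hv, pow_zero]
    exact isCoprime_one_left
  · exact (Ideal.isCoprime_iff_sup_eq.mpr
      (codisjoint_iff.mp (v.isMaximal.out.not_le_iff_codisjoint.mp (h v hv)))).pow_left

theorem eq_of_finprod_pow_eq {n k : HeightOneSpectrum R → ℕ} (hn : (Function.support n).Finite)
    (hk : (Function.support k).Finite) (h : ∏ᶠ v, v.asIdeal ^ n v = ∏ᶠ v, v.asIdeal ^ k v) :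
    n = k := by
  have count_eq {e : HeightOneSpectrum R → ℕ} (he : (Function.support e).Finite)
      (v : HeightOneSpectrum R) :
      FractionalIdeal.count (FractionRing R) v (∏ᶠ w, w.asIdeal ^ e w : Ideal R) = e v := by
    rw [FractionalIdeal.coeIdeal_finprod _ _ le_rfl]
    simp_rw [FractionalIdeal.coeIdeal_pow, ← zpow_natCast]
    exact FractionalIdeal.count_finprod _ v _ (he.subset fun w hw ↦ by simpa using hw)
  funext v
  exact_mod_cast (count_eq hn v).symm.trans (h ▸ count_eq hk v)

theorem exists_mem_intValuation_eq_one {m : Ideal R} {v : HeightOneSpectrum R}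
    (h : ¬ m ≤ v.asIdeal) : ∃ a ∈ m, v.intValuation a = 1 := by
  obtain ⟨a, ha, hav⟩ := SetLike.not_le_iff_exists.mp h
  exact ⟨a, ha, (v.intValuation_eq_one_iff_mem_primeCompl a).mpr hav⟩

end DedekindDomain

section Ideles

variable {F}

open WithZero

theorem valued_algebraMap_adicCompletion (v : HeightOneSpectrum (𝓞 F)) (a : 𝓞 F) :
    Valued.v (algebraMap (𝓞 F) (v.adicCompletion F) a) = v.intValuation a :=
  (valuedAdicCompletion_eq_valuation' v (algebraMap (𝓞 F) F a)).trans
    (valuation_of_algebraMap v a)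

theorem isIntegralAdele_iff {x : AF F} : IsIntegralAdele F x ↔ ∀ v, Valued.v (x v) ≤ 1 :=
  forall_congr' fun v ↦ mem_adicCompletionIntegers _ _ v

theorem mem_idealOf_iff {x : AF F} {a : 𝓞 F} :
    a ∈ idealOf F x ↔ ∀ v, v.intValuation a ≤ Valued.v (x v) :=
  forall_congr' fun v ↦ by rw [valued_algebraMap_adicCompletion]

theorem valued_mul_apply (x y : AF F) (v : HeightOneSpectrum (𝓞 F)) :
    Valued.v ((x * y) v) = Valued.v (x v) * Valued.v (y v) :=
  Valuation.map_mul _ _ _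

theorem valued_units_inv_apply (x : (AF F)ˣ) (v : HeightOneSpectrum (𝓞 F)) :
    Valued.v (((x⁻¹ : (AF F)ˣ) : AF F) v) = (Valued.v ((x : AF F) v))⁻¹ := by
  refine eq_inv_of_mul_eq_one_right ?_
  rw [← valued_mul_apply, ← Units.val_mul, mul_inv_cancel, Units.val_one]
  exact Valuation.map_one _

theorem valued_units_apply_ne_zero (x : (AF F)ˣ) (v : HeightOneSpectrum (𝓞 F)) :
    Valued.v ((x : AF F) v) ≠ 0 :=
  (Valuation.ne_zero_iff _).mpr ((FiniteAdeleRing.isUnit_iff.mp x.isUnit).1 v)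

theorem mem_unitsSub_iff {u : (AF F)ˣ} :
    u ∈ unitsSub F ↔ ∀ v, Valued.v ((u : AF F) v) = 1 := by
  simp only [unitsSub, Subgroup.mem_mk, Submonoid.mem_mk, Subsemigroup.mem_mk, Set.mem_ofPred_eq,
    isIntegralAdele_iff, valued_units_inv_apply, ← forall_and]
  refine forall_congr' fun v ↦ ⟨fun ⟨h, h'⟩ ↦ le_antisymm h ?_, fun h ↦ by simp [h]⟩
  rwa [inv_le_one₀ (zero_lt_iff.mpr (valued_units_apply_ne_zero u v))] at h'

theorem exists_valued_apply_eq_exp_neg {x : (AF F)ˣ} (hx : IsIntegralAdele F x) :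
    ∃ n : HeightOneSpectrum (𝓞 F) → ℕ, (Function.support n).Finite ∧
      ∀ v, Valued.v ((x : AF F) v) = exp (-(n v : ℤ)) := by
  have hexp (v : HeightOneSpectrum (𝓞 F)) :
      ∃ k : ℕ, Valued.v ((x : AF F) v) = exp (-(k : ℤ)) := by
    obtain ⟨k, hk⟩ : ∃ k : ℤ, Valued.v ((x : AF F) v) = exp k :=
      ⟨_, (exp_log (valued_units_apply_ne_zero x v)).symm⟩
    have hk0 : k ≤ 0 := by
      have := isIntegralAdele_iff.mp hx v
      rwa [hk, ← exp_zero, exp_le_exp] at this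
    exact ⟨(-k).toNat, by rw [hk, Int.toNat_of_nonneg (by omega), neg_neg]⟩
  choose n hn using hexp
  refine ⟨n, (Filter.eventually_cofinite.mp (FiniteAdeleRing.isUnit_iff.mp x.isUnit).2).subset
    fun v hv h ↦ hv (by simpa [hn v] using h), hn⟩

theorem exists_units_valued_apply_eq_exp_neg {n : HeightOneSpectrum (𝓞 F) → ℕ}
    (hn : (Function.support n).Finite) :
    ∃ x : (AF F)ˣ, ∀ v,
      Valued.v ((x : AF F) v) = exp (-(n v : ℤ)) ∧ (n v = 0 → (x : AF F) v = 1) := by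
  choose π hπ using fun v : HeightOneSpectrum (𝓞 F) ↦ v.intValuation_exists_uniformizer
  let c (v : HeightOneSpectrum (𝓞 F)) : v.adicCompletion F := algebraMap (𝓞 F) _ (π v) ^ n v
  have hc (v : HeightOneSpectrum (𝓞 F)) : Valued.v (c v) = exp (-(n v : ℤ)) := by
    simp [c, valued_algebraMap_adicCompletion, hπ, ← exp_nsmul]
  have hc_le_one (v : HeightOneSpectrum (𝓞 F)) : Valued.v (c v) ≤ 1 := by
    rw [hc, ← exp_zero, exp_le_exp]
    omega
  let x : AF F := ⟨c, Filter.Eventually.of_forall fun v ↦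
    (mem_adicCompletionIntegers _ _ v).mpr (hc_le_one v)⟩
  have hx : IsUnit x := FiniteAdeleRing.isUnit_iff.mpr
    ⟨fun v ↦ (Valuation.ne_zero_iff Valued.v).mp ((hc v).trans_ne exp_ne_zero),
      hn.eventually_cofinite_notMem.mono fun v hv ↦ (hc v).trans <| by
        rw [Function.notMem_support.mp hv, Nat.cast_zero, neg_zero, exp_zero]⟩
  refine ⟨hx.unit, fun v ↦ ⟨hc v, fun h ↦ ?_⟩⟩
  rw [IsUnit.unit_spec]
  exact (congrArg _ h).trans (pow_zero _)

theorem idealOf_eq_finprod {x : AF F} {n : HeightOneSpectrum (𝓞 F) → ℕ}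
    (hn : (Function.support n).Finite) (hx : ∀ v, Valued.v (x v) = exp (-(n v : ℤ))) :
    idealOf F x = ∏ᶠ v, v.asIdeal ^ n v := by
  ext a
  simp only [mem_idealOf_iff, mem_finprod_pow_iff hn, hx]

theorem idealOf_ne_bot {x : (AF F)ˣ} (hx : IsIntegralAdele F x) : idealOf F x ≠ ⊥ := by
  obtain ⟨n, hn, hxn⟩ := exists_valued_apply_eq_exp_neg hx
  rw [idealOf_eq_finprod hn hxn]
  exact finprod_pow_ne_bot n

theorem idealOf_mul {x y : (AF F)ˣ} (hx : IsIntegralAdele F x) (hy : IsIntegralAdele F y) :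
    idealOf F ((x * y : (AF F)ˣ) : AF F) = idealOf F x * idealOf F y := by
  obtain ⟨n, hn, hxn⟩ := exists_valued_apply_eq_exp_neg hx
  obtain ⟨k, hk, hyk⟩ := exists_valued_apply_eq_exp_neg hy
  have hxy (v : HeightOneSpectrum (𝓞 F)) :
      Valued.v (((x * y : (AF F)ˣ) : AF F) v) = exp (-((n + k) v : ℤ)) := by
    rw [Units.val_mul, valued_mul_apply, hxn, hyk, ← exp_add, Pi.add_apply]
    congr 1
    push_cast
    ring
  rw [idealOf_eq_finprod ((hn.union hk).subset (Function.support_add n k)) hxy,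
    idealOf_eq_finprod hn hxn, idealOf_eq_finprod hk hyk]
  simp_rw [pow_add]
  exact finprod_mul_distrib (hasFiniteMulSupport_pow hn) (hasFiniteMulSupport_pow hk)

theorem idealOf_mul_of_mem_unitsSub (x : AF F) {u : (AF F)ˣ} (hu : u ∈ unitsSub F) :
    idealOf F (x * u) = idealOf F x := by
  ext a
  simp only [mem_idealOf_iff]
  refine forall_congr' fun v ↦ ?_
  rw [valued_mul_apply, mem_unitsSub_iff.mp hu v, mul_one]

theorem idealOf_eq_idealOf_iff {x y : (AF F)ˣ} (hx : IsIntegralAdele F x)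
    (hy : IsIntegralAdele F y) :
    idealOf F x = idealOf F y ↔ ∃ u ∈ unitsSub F, y = x * u := by
  refine ⟨fun h ↦ ⟨x⁻¹ * y, mem_unitsSub_iff.mpr fun v ↦ ?_, by group⟩,
    fun ⟨u, hu, h⟩ ↦ by rw [h, Units.val_mul, idealOf_mul_of_mem_unitsSub _ hu]⟩
  obtain ⟨n, hn, hxn⟩ := exists_valued_apply_eq_exp_neg hx
  obtain ⟨k, hk, hyk⟩ := exists_valued_apply_eq_exp_neg hy
  rw [idealOf_eq_finprod hn hxn, idealOf_eq_finprod hk hyk] at h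
  rw [Units.val_mul, valued_mul_apply, valued_units_inv_apply, hxn, hyk,
    eq_of_finprod_pow_eq hn hk h, inv_mul_cancel₀ (by simp)]

end Ideles

section Congruence

variable {F} {m : Ideal (𝓞 F)}

open scoped nonZeroDivisors

theorem exists_mem_valued_le_of_mem_congIdeal {z : intSubring F} (hz : z ∈ congIdeal F m)
    (v : HeightOneSpectrum (𝓞 F)) :
    ∃ a ∈ m, Valued.v ((z : AF F) v) ≤ v.intValuation a := by
  induction hz using Submodule.span_induction with
  | mem w hw =>
    obtain ⟨a, ha, rfl⟩ := hw
    exact ⟨a, ha, (valued_algebraMap_adicCompletion v a).le⟩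
  | zero => exact ⟨0, m.zero_mem, by change Valued.v (0 : v.adicCompletion F) ≤ _; simp⟩
  | add w w' _ _ hw hw' =>
    obtain ⟨a, ha, hwa⟩ := hw
    obtain ⟨b, hb, hwb⟩ := hw'
    rcases le_total (v.intValuation a) (v.intValuation b) with hab | hab
    · exact ⟨b, hb, Valuation.map_add_le _ (hwa.trans hab) hwb⟩
    · exact ⟨a, ha, Valuation.map_add_le _ hwa (hwb.trans hab)⟩
  | smul c w _ hw =>
    obtain ⟨a, ha, hwa⟩ := hw
    refine ⟨a, ha, ?_⟩
    calc Valued.v (((c • w : intSubring F) : AF F) v)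
        = Valued.v ((c : AF F) v) * Valued.v ((w : AF F) v) := Valuation.map_mul _ _ _
      _ ≤ 1 * v.intValuation a := mul_le_mul' (isIntegralAdele_iff.mp c.2 v) hwa
      _ = v.intValuation a := one_mul _

theorem mem_congIdeal_of_forall (hm : m ≠ ⊥) {z : intSubring F}
    (h : ∀ v, ∃ a ∈ m, Valued.v ((z : AF F) v) ≤ v.intValuation a) : z ∈ congIdeal F m := by
  set M : FractionalIdeal (𝓞 F)⁰ F := (m : FractionalIdeal (𝓞 F)⁰ F)
  have hM : M * M⁻¹ = 1 := mul_inv_cancel₀ (FractionalIdeal.coeIdeal_ne_zero.mpr hm)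
  -- For `a ∈ m` and `b ∈ m⁻¹` the product `b z` is integral, since `|b z_v| ≤ |b a|_v ≤ 1`
  -- for the `a` bounding `z` at `v`; hence `a b z ∈ m·Ô`, and `1 ∈ m m⁻¹` gives `z ∈ m·Ô`.
  suffices key : ∀ t ∈ M * M⁻¹, ∃ w ∈ congIdeal F m, (w : AF F) = algebraMap F (AF F) t * z by
    obtain ⟨w, hw, hwz⟩ := key 1 (hM ▸ FractionalIdeal.one_mem_one _)
    rw [map_one, one_mul, SetLike.coe_eq_coe] at hwz
    exact hwz ▸ hw
  intro t ht
  refine FractionalIdeal.mul_induction_on ht (fun a' ha' b hb ↦ ?_)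
    fun t t' ⟨w, hw, hwt⟩ ⟨w', hw', hwt'⟩ ↦
      ⟨w + w', add_mem hw hw', by simp [hwt, hwt', add_mul]⟩
  obtain ⟨a, ha, rfl⟩ := (FractionalIdeal.mem_coeIdeal _).mp ha'
  have hbz : algebraMap F (AF F) b * z ∈ intSubring F := fun v ↦ by
    obtain ⟨c, hc, hzc⟩ := h v
    obtain ⟨r, hr⟩ := (FractionalIdeal.mem_one_iff _).mp
      (hM ▸ FractionalIdeal.mul_mem_mul (FractionalIdeal.mem_coeIdeal_of_mem _ hc) hb)
    rw [mem_adicCompletionIntegers]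
    calc Valued.v ((algebraMap F (AF F) b * z : AF F) v)
        = v.valuation F b * Valued.v ((z : AF F) v) := by
          rw [← valuedAdicCompletion_eq_valuation']
          exact Valuation.map_mul _ _ _
      _ ≤ v.valuation F b * v.valuation F (algebraMap (𝓞 F) F c) := by
          rw [valuation_of_algebraMap]
          gcongr
      _ = v.intValuation r := by rw [← map_mul, mul_comm, ← hr, valuation_of_algebraMap]
      _ ≤ 1 := v.intValuation_le_one r
  refine ⟨toInt F a * ⟨_, hbz⟩, Ideal.mul_mem_right _ _ (Ideal.mem_map_of_mem _ ha), ?_⟩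
  rw [Subring.coe_mul, map_mul, mul_assoc]
  rfl

theorem mem_congIdeal_iff (hm : m ≠ ⊥) {z : intSubring F} :
    z ∈ congIdeal F m ↔
      ∀ v : HeightOneSpectrum (𝓞 F), m ≤ v.asIdeal →
        ∃ a ∈ m, Valued.v ((z : AF F) v) ≤ v.intValuation a := by
  refine ⟨fun hz v _ ↦ exists_mem_valued_le_of_mem_congIdeal hz v,
    fun h ↦ mem_congIdeal_of_forall hm fun v ↦ ?_⟩
  by_cases hv : m ≤ v.asIdeal
  · exact h v hv
  · obtain ⟨a, ha, ha1⟩ := exists_mem_intValuation_eq_one hv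
    exact ⟨a, ha, ha1 ▸ isIntegralAdele_iff.mp z.2 v⟩

theorem MemKNat.valued_eq_one {x : (AF F)ˣ} (hx : MemKNat F m x) {v : HeightOneSpectrum (𝓞 F)}
    (hv : m ≤ v.asIdeal) : Valued.v ((x : AF F) v) = 1 := by
  obtain ⟨a, ha, hxa⟩ := exists_mem_valued_le_of_mem_congIdeal hx.2 v
  refine (Valuation.map_eq_of_sub_lt _ ?_).trans (Valuation.map_one _)
  rw [Valuation.map_one]
  exact hxa.trans_lt ((v.intValuation_lt_one_iff_mem a).mpr (hv ha))

theorem MemKNat.idealOf_sup_eq_top {x : (AF F)ˣ} (hx : MemKNat F m x) :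
    idealOf F x ⊔ m = ⊤ := by
  obtain ⟨n, hn, hxn⟩ := exists_valued_apply_eq_exp_neg hx.1
  rw [idealOf_eq_finprod hn hxn]
  refine finprod_pow_sup_eq_top fun v hv hmv ↦ hv ?_
  simpa [hxn] using hx.valued_eq_one hmv

theorem MemKNat.memK_of_eq_mul (hm : m ≠ ⊥) {x y u : (AF F)ˣ} (hx : MemKNat F m x)
    (hy : MemKNat F m y) (hu : u ∈ unitsSub F) (h : y = x * u) : MemK F m u := by
  refine ⟨hu, hu.1, (mem_congIdeal_iff hm).mpr fun v hv ↦ ?_⟩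
  have hyx : (⟨y, hy.1⟩ - ⟨x, hx.1⟩ : intSubring F) ∈ congIdeal F m := by
    simpa using sub_mem hy.2 hx.2
  obtain ⟨a, ha, hle⟩ := exists_mem_valued_le_of_mem_congIdeal hyx v
  refine ⟨a, ha, le_of_eq_of_le ?_ hle⟩
  calc Valued.v ((u : AF F) v - 1)
      = Valued.v ((x : AF F) v * ((u : AF F) v - 1)) := by
        rw [Valuation.map_mul, hx.valued_eq_one hv, one_mul]
    _ = Valued.v ((y : AF F) v - (x : AF F) v) := by
        rw [h, mul_sub, mul_one]
        rfl

theorem exists_memKNat_idealOf_eq (hm : m ≠ ⊥) {J : Ideal (𝓞 F)} (hJ : J ≠ ⊥)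
    (hJm : J ⊔ m = ⊤) : ∃ x : (AF F)ˣ, MemKNat F m x ∧ idealOf F x = J := by
  let n (v : HeightOneSpectrum (𝓞 F)) : ℕ := multiplicity v.asIdeal J
  have hn : (Function.support n).Finite :=
    (Ideal.finite_factors hJ).subset fun v hv ↦ multiplicity_ne_zero.mp hv
  obtain ⟨x, hx⟩ := exists_units_valued_apply_eq_exp_neg hn
  have hint : IsIntegralAdele F x := isIntegralAdele_iff.mpr fun v ↦ by
    rw [(hx v).1, ← WithZero.exp_zero, WithZero.exp_le_exp]
    omega
  refine ⟨x, ⟨hint, (mem_congIdeal_iff hm).mpr fun v hv ↦ ⟨0, m.zero_mem, ?_⟩⟩, ?_⟩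
  · have hnv : n v = 0 := multiplicity_eq_zero.mpr fun hvJ ↦ v.isPrime.ne_top <|
      top_le_iff.mp (hJm ▸ sup_le (Ideal.le_of_dvd hvJ) hv)
    change Valued.v ((x : AF F) v - 1) ≤ _
    rw [(hx v).2 hnv, sub_self, Valuation.map_zero]
    exact zero_le
  · rw [idealOf_eq_finprod hn fun v ↦ (hx v).1]
    exact Ideal.finprod_heightOneSpectrum_pow_multiplicity hJ

end Congruence

/-- For a nonzero ideal m of O_F, x ↦ I(x) induces a monoid isomorphism from K(m)\K^♮(m)
onto the monoid of nonzero ideals of O_F coprime to m; in particular the induced map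
K(m)\K^♮(m) → Ô_F^×\Ô_F^♮ is injective. -/
theorem rayClass_monoid_iso (m : Ideal (𝓞 F)) (hm : m ≠ ⊥) :
    (∀ x : (AF F)ˣ, MemKNat F m x →
      idealOf F (x : AF F) ≠ ⊥ ∧ idealOf F (x : AF F) ⊔ m = ⊤) ∧
    (∀ x y : (AF F)ˣ, MemKNat F m x → MemKNat F m y →
      idealOf F ((x * y : (AF F)ˣ) : AF F) = idealOf F (x : AF F) * idealOf F (y : AF F)) ∧
    (∀ x y : (AF F)ˣ, MemKNat F m x → MemKNat F m y →
      (idealOf F (x : AF F) = idealOf F (y : AF F) ↔ ∃ u, MemK F m u ∧ y = x * u)) ∧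
    (∀ J : Ideal (𝓞 F), J ≠ ⊥ → J ⊔ m = ⊤ →
      ∃ x : (AF F)ˣ, MemKNat F m x ∧ idealOf F (x : AF F) = J) ∧
    (∀ x y : (AF F)ˣ, MemKNat F m x → MemKNat F m y →
      (∃ u ∈ unitsSub F, y = x * u) → ∃ u, MemK F m u ∧ y = x * u) := by
  have memK_of_eq_mul {x y : (AF F)ˣ} (hx : MemKNat F m x) (hy : MemKNat F m y) :
      (∃ u ∈ unitsSub F, y = x * u) → ∃ u, MemK F m u ∧ y = x * u :=
    fun ⟨u, hu, h⟩ ↦ ⟨u, hx.memK_of_eq_mul hm hy hu h, h⟩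
  refine ⟨fun x hx ↦ ⟨idealOf_ne_bot hx.1, hx.idealOf_sup_eq_top⟩,
    fun x y hx hy ↦ idealOf_mul hx.1 hy.1, fun x y hx hy ↦ ?_,
    fun J hJ hJm ↦ exists_memKNat_idealOf_eq hm hJ hJm, fun x y hx hy ↦ memK_of_eq_mul hx hy⟩
  rw [idealOf_eq_idealOf_iff hx.1 hy.1]
  exact ⟨memK_of_eq_mul hx hy, fun ⟨u, hu, h⟩ ↦ ⟨u, hu.1, h⟩⟩
end
end
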